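/- If S is a subset of an infinite dimensional real Banach space X such that the sets S_n of n-term nonzero-coefficient linear combinations of distinct elements of S all have the Baire property and cover X \ {0}, and S is linearly independent, then some S_m is non-meager and comeager in some nonempty open set. -/
import Mathlib

open Set

def lincombs {X : Type*} [AddCommGroup X] [Module ℝ X] (S : Set X) (n : ℕ) : Set X :=
  {v | ∃ (s : Finset X) (c : X → ℝ), ↑s ⊆ S ∧ s.card = n ∧
    (∀ x ∈ s, c x ≠ 0) ∧ v = ∑ x ∈ s, c x • x}

def HasBaireProperty {X : Type*} [TopologicalSpace X] (S : Set X) : Prop :=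
  ∃ O : Set X, IsOpen O ∧ IsMeagre (symmDiff O S)

theorem least_nonmeager_level
    (X : Type*) [NormedAddCommGroup X] [NormedSpace ℝ X] [CompleteSpace X]
    (hinf : ¬ FiniteDimensional ℝ X)
    (S : Set X) (hli : LinearIndependent ℝ ((↑) : S → X))
    (hsp : Submodule.span ℝ S = ⊤)
    (hbp : ∀ n : ℕ, 0 < n → HasBaireProperty (lincombs S n))
    (hcov : (univ : Set X) \ {0} ⊆ ⋃ n ∈ {n : ℕ | 0 < n}, lincombs S n) :
    ∃ m : ℕ, 0 < m ∧ ¬ IsMeagre (lincombs S m) ∧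
      (∀ k : ℕ, 0 < k → k < m → IsMeagre (lincombs S k)) ∧
      ∃ O : Set X, IsOpen O ∧ O.Nonempty ∧ IsMeagre (O \ lincombs S m) := by
  have hnt : Nontrivial X := by
    by_contra h
    have : Subsingleton X := not_nontrivial_iff_subsingleton.mp h
    exact hinf inferInstance
  -- {0} is meagre
  have h0 : IsMeagre ({0} : Set X) := by
    have hcl : IsClosed ({0} : Set X) := isClosed_singleton
    have hnd : IsNowhereDense ({0} : Set X) := by
      rw [hcl.isNowhereDense_iff]
      exact interior_singleton 0
    rw [isMeagre_iff_countable_union_isNowhereDense]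
    exact ⟨{{0}}, by simp [hnd], countable_singleton _, by simp⟩
  have huniv : ¬ IsMeagre (univ : Set X) := by
    intro h
    rw [IsMeagre, compl_univ] at h
    have := dense_of_mem_residual h
    simpa [dense_iff_inter_open] using this.nonempty
  -- existence of nonmeagre level
  have hex : ∃ n : ℕ, 0 < n ∧ ¬ IsMeagre (lincombs S n) := by
    by_contra h
    push_neg at h
    have : IsMeagre (⋃ n : ℕ, if 0 < n then lincombs S n else ({0} : Set X)) := by
      apply isMeagre_iUnion
      intro n
      by_cases hn : 0 < n <;> simp [hn, h n, h0]
    apply huniv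
    apply this.mono
    intro x _
    by_cases hx : x = (0 : X)
    · exact mem_iUnion.mpr ⟨0, by simp [hx]⟩
    · obtain ⟨n, hn, hxn⟩ := by simpa using hcov (show x ∈ univ \ {0} by simp [hx])
      exact mem_iUnion.mpr ⟨n, by simp [hn, hxn]⟩
  classical
  let m := Nat.find hex
  obtain ⟨hm, hnm⟩ : 0 < m ∧ ¬ IsMeagre (lincombs S m) := Nat.find_spec hex
  refine ⟨m, hm, hnm, ?_, ?_⟩
  · intro k hk hkm
    by_contra hc
    exact Nat.find_min hex hkm ⟨hk, hc⟩
  · obtain ⟨O, hO, hmeag⟩ := hbp m hm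
    refine ⟨O, hO, ?_, hmeag.mono fun x hx => ?_⟩
    · rcases eq_empty_or_nonempty O with h | h
      · exfalso
        apply hnm
        rw [h, show symmDiff (∅ : Set X) (lincombs S m) = lincombs S m by
          simp [symmDiff_def]] at hmeag
        exact hmeag
      · exact h
    · exact Or.inl hx
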